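/- arXiv:2404.04355 — 3 statements merged into one kernel-verified Lean document; each statement's English description precedes it below -/
import Mathlib

section
/- Let p be a positive integer, let ξ : ℝ^p → ℝ be L_ξ-smooth, and let δ > 0. Then the smooth approximation ξ_δ is differentiable and for every w ∈ ℝ^p, ‖∇ξ_δ(w) − ∇ξ(w)‖ ≤ L_ξ p δ / 2. -/
/-!
Since `∇ξ` is Lipschitz, `‖∇ξ (w + δ v)‖` grows at most linearly in `v`, which justifies
differentiating under the integral: `∇ξ_δ w = E[∇ξ (w + δ v)]`. The Lipschitz bound then gives
`‖∇ξ_δ w - ∇ξ w‖ ≤ L_ξ δ E‖v‖`, and polar coordinates give `E‖v‖ = p / (p + 1) ≤ p / 2`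
for `v` uniform on the unit ball.
-/

open MeasureTheory Metric

/-- The uniform probability measure on the closed unit ball `B_p ⊆ ℝ^p`. -/
noncomputable def ballUniform (p : ℕ) : Measure (EuclideanSpace ℝ (Fin p)) :=
  (volume (closedBall (0 : EuclideanSpace ℝ (Fin p)) 1))⁻¹ •
    (volume : Measure (EuclideanSpace ℝ (Fin p))).restrict (closedBall 0 1)

open Set
open scoped NNReal

section Smoothing

variable {E F : Type*} [NormedAddCommGroup E] [NormedSpace ℝ E] [MeasurableSpace E]
  [NormedAddCommGroup F] [NormedSpace ℝ F] {μ : Measure E}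

theorem LipschitzWith.norm_integral_comp_add_smul_sub_le [CompleteSpace F]
    [IsProbabilityMeasure μ] {g : E → F} {K : ℝ≥0} (hg : LipschitzWith K g) (w : E) (δ : ℝ)
    (hgμ : Integrable (fun v => g (w + δ • v)) μ) (hμ : Integrable (‖·‖) μ) :
    ‖∫ v, g (w + δ • v) ∂μ - g w‖ ≤ K * |δ| * ∫ v, ‖v‖ ∂μ := by
  have hpt (v : E) : ‖g (w + δ • v) - g w‖ ≤ K * |δ| * ‖v‖ := by
    simpa [norm_smul, mul_assoc] using hg.norm_sub_le (w + δ • v) w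
  calc ‖∫ v, g (w + δ • v) ∂μ - g w‖ = ‖∫ v, (g (w + δ • v) - g w) ∂μ‖ := by
        rw [integral_sub hgμ (integrable_const _), integral_const, probReal_univ, one_smul]
    _ ≤ ∫ v, K * |δ| * ‖v‖ ∂μ :=
        norm_integral_le_of_norm_le (hμ.const_mul _) (ae_of_all _ hpt)
    _ = K * |δ| * ∫ v, ‖v‖ ∂μ := integral_const_mul _ _

theorem hasFDerivAt_integral_comp_add_smul [OpensMeasurableSpace E] [SecondCountableTopology E]
    [IsFiniteMeasure μ] {f : E → F} {K : ℝ≥0} (hf : Differentiable ℝ f)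
    (hf' : LipschitzWith K (fderiv ℝ f)) (δ : ℝ) {w : E}
    (hfμ : Integrable (fun v => f (w + δ • v)) μ) (hμ : Integrable (‖·‖) μ) :
    HasFDerivAt (fun x => ∫ v, f (x + δ • v) ∂μ) (∫ v, fderiv ℝ f (w + δ • v) ∂μ) w := by
  have hbound (v : E) {x : E} (hx : x ∈ ball w 1) :
      ‖fderiv ℝ f (x + δ • v)‖ ≤ ‖fderiv ℝ f w‖ + K * (1 + |δ| * ‖v‖) := by
    have hdist : ‖x + δ • v - w‖ ≤ 1 + |δ| * ‖v‖ := by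
      rw [add_sub_right_comm]
      refine (norm_add_le _ _).trans ?_
      rw [norm_smul, Real.norm_eq_abs]
      gcongr
      exact (mem_ball_iff_norm.1 hx).le
    calc ‖fderiv ℝ f (x + δ • v)‖ ≤ ‖fderiv ℝ f w‖ + ‖fderiv ℝ f (x + δ • v) - fderiv ℝ f w‖ :=
          norm_le_insert' _ _
      _ ≤ ‖fderiv ℝ f w‖ + K * (1 + |δ| * ‖v‖) := by
          gcongr
          exact (hf'.norm_sub_le _ _).trans (by gcongr)
  have hshift : Continuous fun v : E => w + δ • v := by fun_prop
  refine hasFDerivAt_integral_of_dominated_of_fderiv_le (ball_mem_nhds w one_pos)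
    (.of_forall fun x => (hf.continuous.comp (by fun_prop)).aestronglyMeasurable) hfμ
    (hf'.continuous.comp hshift).aestronglyMeasurable
    (ae_of_all _ fun v x hx => hbound v hx)
    ((integrable_const _).add (((integrable_const 1).add (hμ.const_mul |δ|)).const_mul K))
    (ae_of_all _ fun v x _ => (hasFDerivAt_comp_add_right _).2 (hf _).hasFDerivAt)

end Smoothing

theorem setIntegral_norm_closedBall_addHaar {E : Type*} [NormedAddCommGroup E] [NormedSpace ℝ E]
    [Nontrivial E] [FiniteDimensional ℝ E] [MeasurableSpace E] [BorelSpace E]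
    (μ : Measure E) [μ.IsAddHaarMeasure] :
    ∫ x in closedBall (0 : E) 1, ‖x‖ ∂μ =
      Module.finrank ℝ E / (Module.finrank ℝ E + 1) * μ.real (closedBall 0 1) := by
  set n := Module.finrank ℝ E
  have hn : n ≠ 0 := Module.finrank_pos.ne'
  have hradial : ∫ x in closedBall (0 : E) 1, ‖x‖ ∂μ = ∫ x, (Iic 1).indicator id ‖x‖ ∂μ := by
    rw [← integral_indicator measurableSet_closedBall]
    congr 1 with x
    simp [indicator]
  have hpolar : ∫ y in Ioi (0 : ℝ), y ^ (n - 1) • (Iic 1).indicator id y = 1 / (n + 1) := by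
    have hpow : EqOn (fun y : ℝ => y ^ (n - 1) • (Iic 1).indicator id y)
        ((Iic 1).indicator (· ^ n)) (Ioi 0) := by
      intro y _
      by_cases hy : y ≤ 1
      · simp [hy, ← pow_succ, Nat.sub_add_cancel (Nat.one_le_iff_ne_zero.2 hn)]
      · simp [hy]
    rw [setIntegral_congr_fun measurableSet_Ioi hpow, setIntegral_indicator measurableSet_Iic,
      Ioi_inter_Iic, ← intervalIntegral.integral_of_le zero_le_one, integral_pow]
    simp
  rw [hradial, integral_fun_norm_addHaar, hpolar, nsmul_eq_mul, smul_eq_mul,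
    ← Measure.addHaar_real_closedBall_eq_addHaar_real_ball]
  ring

section Gradient

variable {H : Type*} [NormedAddCommGroup H] [InnerProductSpace ℝ H] [CompleteSpace H]

theorem LipschitzWith.fderiv_of_gradient {f : H → ℝ} {K : ℝ≥0}
    (hf : LipschitzWith K (gradient f)) : LipschitzWith K (fderiv ℝ f) := by
  simpa [toDual_comp_gradient] using
    (InnerProductSpace.toDual ℝ H).lipschitz.comp hf

theorem norm_gradient_sub_gradient (f g : H → ℝ) (x : H) :
    ‖gradient f x - gradient g x‖ = ‖fderiv ℝ f x - fderiv ℝ g x‖ := by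
  rw [← toDual_gradient, ← toDual_gradient, ← map_sub, LinearIsometryEquiv.norm_map]

end Gradient

section BallUniform

variable {p : ℕ}

theorem volume_closedBall_euclidean_ne_zero :
    volume (closedBall (0 : EuclideanSpace ℝ (Fin p)) 1) ≠ 0 :=
  (measure_closedBall_pos _ _ one_pos).ne'

instance isProbabilityMeasure_ballUniform : IsProbabilityMeasure (ballUniform p) := by
  constructor
  rw [ballUniform, Measure.smul_apply, Measure.restrict_apply_univ, smul_eq_mul,
    ENNReal.inv_mul_cancel volume_closedBall_euclidean_ne_zero measure_closedBall_lt_top.ne]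

theorem Continuous.integrable_ballUniform {X : Type*} [NormedAddCommGroup X]
    {g : EuclideanSpace ℝ (Fin p) → X} (hg : Continuous g) : Integrable g (ballUniform p) :=
  (hg.continuousOn.integrableOn_compact (isCompact_closedBall _ _)).smul_measure
    (ENNReal.inv_ne_top.2 volume_closedBall_euclidean_ne_zero)

theorem integral_norm_ballUniform : ∫ v, ‖v‖ ∂ballUniform p = p / (p + 1) := by
  rcases p.eq_zero_or_pos with rfl | hp
  · simp [Subsingleton.elim _ (0 : EuclideanSpace ℝ (Fin 0))]
  have : Nontrivial (EuclideanSpace ℝ (Fin p)) := by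
    have : Nonempty (Fin p) := ⟨⟨0, hp⟩⟩
    infer_instance
  have hvol : volume.real (closedBall (0 : EuclideanSpace ℝ (Fin p)) 1) ≠ 0 :=
    ENNReal.toReal_ne_zero.2 ⟨volume_closedBall_euclidean_ne_zero, measure_closedBall_lt_top.ne⟩
  rw [ballUniform, integral_smul_measure, setIntegral_norm_closedBall_addHaar,
    finrank_euclideanSpace_fin, ENNReal.toReal_inv, smul_eq_mul, ← measureReal_def]
  field_simp

end BallUniform

theorem smoothed_gradient_close_general
    (p : ℕ) (ξ : EuclideanSpace ℝ (Fin p) → ℝ) (Lξ : ℝ) (hLξ : 0 ≤ Lξ)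
    (hdiff : Differentiable ℝ ξ)
    (hlip : LipschitzWith Lξ.toNNReal (fun x => gradient ξ x))
    (δ : ℝ) (hδ : 0 < δ) :
    Differentiable ℝ (fun w => ∫ v', ξ (w + δ • v') ∂(ballUniform p)) ∧
    ∀ w : EuclideanSpace ℝ (Fin p),
      ‖gradient (fun w => ∫ v', ξ (w + δ • v') ∂(ballUniform p)) w - gradient ξ w‖
        ≤ Lξ * p * δ / 2 := by
  have hlip_fderiv := hlip.fderiv_of_gradient
  have hnorm := continuous_norm.integrable_ballUniform (p := p)
  have hshift (w : EuclideanSpace ℝ (Fin p)) : Continuous fun v => w + δ • v := by fun_prop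
  have hderiv (w) := hasFDerivAt_integral_comp_add_smul hdiff hlip_fderiv δ
    (hdiff.continuous.comp (hshift w)).integrable_ballUniform hnorm
  refine ⟨fun w => (hderiv w).differentiableAt, fun w => ?_⟩
  have hratio : (p : ℝ) / (p + 1) ≤ p / 2 := by
    rw [div_le_div_iff₀ (by positivity) two_pos]
    have : (p : ℝ) ≤ p ^ 2 := by exact_mod_cast Nat.le_self_pow two_ne_zero p
    nlinarith
  calc ‖gradient (fun w => ∫ v', ξ (w + δ • v') ∂(ballUniform p)) w - gradient ξ w‖
      = ‖∫ v, fderiv ℝ ξ (w + δ • v) ∂(ballUniform p) - fderiv ℝ ξ w‖ := by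
        rw [norm_gradient_sub_gradient, (hderiv w).fderiv]
    _ ≤ Lξ.toNNReal * |δ| * ∫ v, ‖v‖ ∂(ballUniform p) :=
        hlip_fderiv.norm_integral_comp_add_smul_sub_le w δ
          (hlip_fderiv.continuous.comp (hshift w)).integrable_ballUniform hnorm
    _ = Lξ * δ * (p / (p + 1)) := by
        rw [Real.coe_toNNReal _ hLξ, abs_of_pos hδ, integral_norm_ballUniform]
    _ ≤ Lξ * δ * (p / 2) := mul_le_mul_of_nonneg_left hratio (by positivity)
    _ = Lξ * p * δ / 2 := by ring

/-- If `ξ : ℝ^p → ℝ` is `L_ξ`-smooth and `δ > 0`, then the smooth approximation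
`ξ_δ(w) = E_{v' ∼ U(B_p)}[ξ(w + δ v')]` is differentiable and its gradient satisfies
`‖∇ξ_δ(w) - ∇ξ(w)‖ ≤ L_ξ p δ / 2` for every `w`. -/
theorem smoothed_gradient_close
    (p : ℕ) (hp : 0 < p) (ξ : EuclideanSpace ℝ (Fin p) → ℝ) (Lξ : ℝ) (hLξ : 0 ≤ Lξ)
    (hdiff : Differentiable ℝ ξ)
    (hlip : LipschitzWith Lξ.toNNReal (fun x => gradient ξ x))
    (δ : ℝ) (hδ : 0 < δ) :
    Differentiable ℝ (fun w => ∫ v', ξ (w + δ • v') ∂(ballUniform p)) ∧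
    ∀ w : EuclideanSpace ℝ (Fin p),
      ‖gradient (fun w => ∫ v', ξ (w + δ • v') ∂(ballUniform p)) w - gradient ξ w‖
        ≤ Lξ * p * δ / 2 :=
  smoothed_gradient_close_general p ξ Lξ hLξ hdiff hlip δ hδ
end

section
/- Let J : ℝ^p → ℝ be L-smooth (L > 0) with J* := inf J > −∞, let M_Φ ≥ 0, let (ε_{H,k})_{k≥0} be nonnegative reals, and let (ε_k)_{k≥0} be vectors in ℝ^p with ‖ε_k‖ ≤ M_Φ ε_{H,k} for all k. Let η ∈ (0, 1/(4L)] and define the deterministic inexact gradient iteration w_{k+1} = w_k − η (∇J(w_k) − ε_k) from an arbitrary w_0 ∈ ℝ^p. Then for every positive integer T, (1/T) Σ_{k=0}^{T−1} ‖∇J(w_k)‖² ≤ 4 (J(w_0) − J*)/(η T) + (3 M_Φ² / T) Σ_{k=0}^{T−1} ε_{H,k}²; in particular, for η = 1/(4L) the first term equals 16 L (J(w_0) − J*)/T. -/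
/-!
By the descent lemma `J y ≤ J x + ⟪∇J x, y - x⟫ + L/2 ‖y - x‖²`, one inexact step with `Lη ≤ 1`
decreases `J` by at least `η/2 (‖∇J(w_k)‖² - ‖ε_k‖²)`, as one sees by expanding
`‖ε_k‖² = ‖∇J(w_k) - (∇J(w_k) - ε_k)‖²`. Summing over `k < T` telescopes to at most
`J(w_0) - J*`, which gives the bound with the sharper constants `2` and `1` in place of `4` and `3`.
-/

open Finset

open scoped NNReal RealInnerProductSpace

section LipschitzGradient

variable {F : Type*} [NormedAddCommGroup F] [InnerProductSpace ℝ F] [CompleteSpace F]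
  {J : F → ℝ} {K : ℝ≥0}

theorem hasDerivAt_comp_add_smul (hJ : Differentiable ℝ J) (x v : F) (t : ℝ) :
    HasDerivAt (fun t : ℝ => J (x + t • v)) ⟪gradient J (x + t • v), v⟫ t := by
  have hline : HasDerivAt (fun t : ℝ => x + t • v) v t := by
    simpa using ((hasDerivAt_id t).smul_const v).const_add x
  rw [inner_gradient_left]
  exact (hJ _).hasFDerivAt.comp_hasDerivAt t hline

theorem inner_gradient_add_smul_le (hK : LipschitzWith K (gradient J)) (x v : F) {t : ℝ}
    (ht : 0 ≤ t) :
    ⟪gradient J (x + t • v), v⟫ ≤ ⟪gradient J x, v⟫ + K * t * ‖v‖ ^ 2 := by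
  have hlip : ‖gradient J (x + t • v) - gradient J x‖ ≤ K * (t * ‖v‖) := by
    simpa [norm_smul, abs_of_nonneg ht] using hK.norm_sub_le (x + t • v) x
  have hcs := real_inner_le_norm (gradient J (x + t • v) - gradient J x) v
  rw [inner_sub_left] at hcs
  nlinarith [norm_nonneg v]

theorem le_add_inner_gradient_add_sq (hJ : Differentiable ℝ J)
    (hK : LipschitzWith K (gradient J)) (x y : F) :
    J y ≤ J x + ⟪gradient J x, y - x⟫ + K / 2 * ‖y - x‖ ^ 2 := by
  set v := y - x
  have hB : ∀ t : ℝ, HasDerivAt (fun t => J x + t * ⟪gradient J x, v⟫ + K / 2 * t ^ 2 * ‖v‖ ^ 2)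
      (⟪gradient J x, v⟫ + K * t * ‖v‖ ^ 2) t := fun t =>
    ((((hasDerivAt_id' t).mul_const ⟪gradient J x, v⟫).const_add (J x)).add
      (((hasDerivAt_pow 2 t).const_mul ((K : ℝ) / 2)).mul_const (‖v‖ ^ 2))).congr_deriv
      (by push_cast; ring)
  have hf := hasDerivAt_comp_add_smul hJ x v
  have key := image_le_of_deriv_right_le_deriv_boundary (a := 0) (b := 1)
    (fun t _ => (hf t).continuousAt.continuousWithinAt) (fun t _ => (hf t).hasDerivWithinAt)
    (by simp) (fun t _ => (hB t).continuousAt.continuousWithinAt)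
    (fun t _ => (hB t).hasDerivWithinAt)
    (fun t ht => inner_gradient_add_smul_le hK x v ht.1) (Set.right_mem_Icc.2 zero_le_one)
  simpa [v] using key

theorem inexact_gradient_step_le (hJ : Differentiable ℝ J) (hK : LipschitzWith K (gradient J))
    {η : ℝ} (hη : 0 ≤ η) (hKη : K * η ≤ 1) (w e : F) :
    η / 2 * (‖gradient J w‖ ^ 2 - ‖e‖ ^ 2) ≤ J w - J (w - η • (gradient J w - e)) := by
  set g := gradient J w
  have hdesc := le_add_inner_gradient_add_sq hJ hK w (w - η • (g - e))
  rw [sub_sub_cancel_left, inner_neg_right, real_inner_smul_right, norm_neg, norm_smul,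
    Real.norm_eq_abs, mul_pow, sq_abs] at hdesc
  have hpol : ‖e‖ ^ 2 = ‖g‖ ^ 2 - 2 * ⟪g, g - e⟫ + ‖g - e‖ ^ 2 := by
    rw [← norm_sub_sq_real, sub_sub_cancel]
  have hquad : K * η ^ 2 * ‖g - e‖ ^ 2 ≤ η * ‖g - e‖ ^ 2 := by
    gcongr
    nlinarith
  nlinarith

theorem inexact_gradient_descent_sum_le (hJ : Differentiable ℝ J)
    (hK : LipschitzWith K (gradient J)) {η : ℝ} (hη : 0 ≤ η) (hKη : K * η ≤ 1) {w ε : ℕ → F}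
    (hw : ∀ k, w (k + 1) = w k - η • (gradient J (w k) - ε k)) (T : ℕ) :
    η / 2 * ∑ k ∈ range T, (‖gradient J (w k)‖ ^ 2 - ‖ε k‖ ^ 2) ≤ J (w 0) - J (w T) := by
  rw [mul_sum, ← sum_range_sub' (fun k => J (w k))]
  exact sum_le_sum fun k _ => hw k ▸ inexact_gradient_step_le hJ hK hη hKη (w k) (ε k)

end LipschitzGradient

theorem model_based_inexact_gradient_descent_general
    (p : ℕ) (J : EuclideanSpace ℝ (Fin p) → ℝ) (L : ℝ) (hL : 0 < L)
    (hdiff : Differentiable ℝ J)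
    (hlip : LipschitzWith L.toNNReal (fun x => gradient J x))
    (hbdd : BddBelow (Set.range J))
    (MΦ : ℝ) (εH : ℕ → ℝ)
    (ε : ℕ → EuclideanSpace ℝ (Fin p)) (hε : ∀ k, ‖ε k‖ ≤ MΦ * εH k)
    (η : ℝ) (hη0 : 0 < η) (hη1 : η ≤ 1 / (4 * L))
    (w : ℕ → EuclideanSpace ℝ (Fin p))
    (hw : ∀ k : ℕ, w (k + 1) = w k - η • (gradient J (w k) - ε k)) :
    ∀ T : ℕ, 0 < T →
      ((1 / (T : ℝ)) * ∑ k ∈ range T, ‖gradient J (w k)‖ ^ 2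
        ≤ 4 * (J (w 0) - sInf (Set.range J)) / (η * T)
          + (3 * MΦ ^ 2 / T) * ∑ k ∈ range T, εH k ^ 2) ∧
      (η = 1 / (4 * L) →
        4 * (J (w 0) - sInf (Set.range J)) / (η * T)
          = 16 * L * (J (w 0) - sInf (Set.range J)) / T) := by
  intro T hT
  set S := ∑ k ∈ range T, ‖gradient J (w k)‖ ^ 2
  set E := ∑ k ∈ range T, εH k ^ 2
  set D := J (w 0) - sInf (Set.range J)
  have hLη : (L.toNNReal : ℝ) * η ≤ 1 := by
    rw [Real.coe_toNNReal _ hL.le]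
    rw [le_div_iff₀ (by positivity)] at hη1
    linarith
  have hdesc := inexact_gradient_descent_sum_le hdiff hlip hη0.le hLη hw T
  rw [sum_sub_distrib] at hdesc
  have hgap : J (w 0) - J (w T) ≤ D := sub_le_sub_left (csInf_le hbdd ⟨w T, rfl⟩) _
  have hgap0 : 0 ≤ D := sub_nonneg.2 (csInf_le hbdd ⟨w 0, rfl⟩)
  have herr : ∑ k ∈ range T, ‖ε k‖ ^ 2 ≤ MΦ ^ 2 * E := by
    rw [mul_sum]
    exact sum_le_sum fun k _ => mul_pow MΦ (εH k) 2 ▸ pow_le_pow_left₀ (norm_nonneg _) (hε k) 2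
  have herr0 : 0 ≤ MΦ ^ 2 * E := by positivity
  have hT' : (0 : ℝ) < T := Nat.cast_pos.2 hT
  constructor
  · calc 1 / (T : ℝ) * S = η * S / (η * T) := by field_simp
      _ ≤ (4 * D + 3 * η * (MΦ ^ 2 * E)) / (η * T) := by
          gcongr
          linarith [mul_le_mul_of_nonneg_left herr hη0.le, mul_nonneg hη0.le herr0]
      _ = 4 * D / (η * T) + 3 * MΦ ^ 2 / T * E := by field_simp
  · rintro rfl
    field_simp
    ring

/-- Performance of the deterministic model-based controller (inexact gradient descent):
if `J` is `L`-smooth, bounded below, `‖ε_k‖ ≤ M_Φ ε_{H,k}`, `η ∈ (0, 1/(4L)]`, and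
`w_{k+1} = w_k - η (∇J(w_k) - ε_k)`, then for every `T ≥ 1`,
`(1/T) Σ_{k<T} ‖∇J(w_k)‖² ≤ 4 (J(w_0) - J*)/(η T) + (3 M_Φ²/T) Σ_{k<T} ε_{H,k}²`;
in particular for `η = 1/(4L)` the first term equals `16 L (J(w_0) - J*)/T`. -/
theorem model_based_inexact_gradient_descent
    (p : ℕ) (hp : 0 < p) (J : EuclideanSpace ℝ (Fin p) → ℝ) (L : ℝ) (hL : 0 < L)
    (hdiff : Differentiable ℝ J)
    (hlip : LipschitzWith L.toNNReal (fun x => gradient J x))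
    (hbdd : BddBelow (Set.range J))
    (MΦ : ℝ) (hMΦ : 0 ≤ MΦ) (εH : ℕ → ℝ) (hεH : ∀ k, 0 ≤ εH k)
    (ε : ℕ → EuclideanSpace ℝ (Fin p)) (hε : ∀ k, ‖ε k‖ ≤ MΦ * εH k)
    (η : ℝ) (hη0 : 0 < η) (hη1 : η ≤ 1 / (4 * L))
    (w : ℕ → EuclideanSpace ℝ (Fin p))
    (hw : ∀ k : ℕ, w (k + 1) = w k - η • (gradient J (w k) - ε k)) :
    ∀ T : ℕ, 0 < T →
      ((1 / (T : ℝ)) * ∑ k ∈ range T, ‖gradient J (w k)‖ ^ 2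
        ≤ 4 * (J (w 0) - sInf (Set.range J)) / (η * T)
          + (3 * MΦ ^ 2 / T) * ∑ k ∈ range T, εH k ^ 2) ∧
      (η = 1 / (4 * L) →
        4 * (J (w 0) - sInf (Set.range J)) / (η * T)
          = 16 * L * (J (w 0) - sInf (Set.range J)) / T) :=
  model_based_inexact_gradient_descent_general p J L hL hdiff hlip hbdd MΦ εH ε hε η hη0 hη1 w hw
end

section
/- Let p be a positive integer, T a positive integer, D̄ ≥ 0, and let w_1, …, w_{T+1} and u_1, …, u_T be vectors in ℝ^p with ‖w_k‖ ≤ D̄ for all 1 ≤ k ≤ T+1 and ‖u_k‖ ≤ D̄ for all 1 ≤ k ≤ T. Then Σ_{k=1}^{T} (‖w_k − u_k‖² − ‖w_{k+1} − u_k‖²) ≤ 5 D̄² + 2 D̄ Σ_{k=1}^{T−1} ‖u_k − u_{k+1}‖. -/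
/-!
Summation by parts. Writing `‖w - u‖² = ‖w‖² - 2⟪w, u⟫ + ‖u‖²`, the sum telescopes to
`‖w₁‖² - ‖w_{T+1}‖² - 2⟪w₁, u₁⟫ + 2⟪w_{T+1}, u_T⟫ + 2 ∑_{k<T} ⟪w_{k+1}, u_k - u_{k+1}⟫`,
and Cauchy–Schwarz bounds the boundary terms by `D̄² + 2D̄² + 2D̄²` and the `k`-th
term of the remaining sum by `2D̄ ‖u_k - u_{k+1}‖`.
-/

open Finset RealInnerProductSpace

section

variable {E : Type*} [NormedAddCommGroup E] [InnerProductSpace ℝ E]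

lemma real_inner_le_mul_norm_of_norm_le {x : E} {D : ℝ} (hx : ‖x‖ ≤ D) (y : E) :
    ⟪x, y⟫ ≤ D * ‖y‖ :=
  (real_inner_le_norm x y).trans (mul_le_mul_of_nonneg_right hx (norm_nonneg y))

lemma sum_Icc_norm_sub_sq_sub_norm_sub_sq (w u : ℕ → E) (n : ℕ) :
    ∑ k ∈ Icc 1 (n + 1), (‖w k - u k‖ ^ 2 - ‖w (k + 1) - u k‖ ^ 2)
      = ‖w 1‖ ^ 2 - ‖w (n + 2)‖ ^ 2 - 2 * ⟪w 1, u 1⟫ + 2 * ⟪w (n + 2), u (n + 1)⟫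
        + 2 * ∑ k ∈ Icc 1 n, ⟪w (k + 1), u k - u (k + 1)⟫ := by
  induction n with
  | zero => simp [norm_sub_sq_real]; ring
  | succ n ih =>
    rw [sum_Icc_succ_top (by omega), ih, sum_Icc_succ_top (by omega), norm_sub_sq_real,
      norm_sub_sq_real, inner_sub_right]
    ring

lemma sum_Icc_norm_sub_sq_sub_norm_sub_sq_le (w u : ℕ → E) (n : ℕ) {D : ℝ}
    (hw : ∀ k, 1 ≤ k → k ≤ n + 2 → ‖w k‖ ≤ D) (hu : ∀ k, 1 ≤ k → k ≤ n + 1 → ‖u k‖ ≤ D) :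
    ∑ k ∈ Icc 1 (n + 1), (‖w k - u k‖ ^ 2 - ‖w (k + 1) - u k‖ ^ 2)
      ≤ 5 * D ^ 2 + 2 * D * ∑ k ∈ Icc 1 n, ‖u k - u (k + 1)‖ := by
  have hw₁ := hw 1 le_rfl (by omega)
  have hu₁ := hu 1 le_rfl (by omega)
  have hD : 0 ≤ D := (norm_nonneg _).trans hw₁
  have hfirst : ‖w 1‖ ^ 2 ≤ D ^ 2 := pow_le_pow_left₀ (norm_nonneg _) hw₁ 2
  have hinner₁ : -⟪w 1, u 1⟫ ≤ D ^ 2 := by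
    have := real_inner_le_mul_norm_of_norm_le hw₁ (-u 1)
    rw [inner_neg_right, norm_neg] at this
    nlinarith
  have hinner_last : ⟪w (n + 2), u (n + 1)⟫ ≤ D ^ 2 := by
    have := real_inner_le_mul_norm_of_norm_le (hw (n + 2) (by omega) le_rfl) (u (n + 1))
    nlinarith [hu (n + 1) (by omega) le_rfl]
  have hsum : ∑ k ∈ Icc 1 n, ⟪w (k + 1), u k - u (k + 1)⟫
      ≤ D * ∑ k ∈ Icc 1 n, ‖u k - u (k + 1)‖ := by
    rw [mul_sum]
    refine sum_le_sum fun k hk => real_inner_le_mul_norm_of_norm_le (hw _ ?_ ?_) _ <;>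
      simp only [mem_Icc] at hk <;> omega
  rw [sum_Icc_norm_sub_sq_sub_norm_sub_sq]
  nlinarith [sq_nonneg ‖w (n + 2)‖]

end

theorem telescoping_distance_bound_general
    (p T : ℕ) (hT : 0 < T) (Dbar : ℝ)
    (w u : ℕ → EuclideanSpace ℝ (Fin p))
    (hw : ∀ k, 1 ≤ k → k ≤ T + 1 → ‖w k‖ ≤ Dbar)
    (hu : ∀ k, 1 ≤ k → k ≤ T → ‖u k‖ ≤ Dbar) :
    ∑ k ∈ Icc 1 T, (‖w k - u k‖ ^ 2 - ‖w (k + 1) - u k‖ ^ 2)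
      ≤ 5 * Dbar ^ 2 + 2 * Dbar * ∑ k ∈ Icc 1 (T - 1), ‖u k - u (k + 1)‖ := by
  obtain ⟨n, rfl⟩ : ∃ n, T = n + 1 := Nat.exists_eq_add_one.mpr hT
  exact sum_Icc_norm_sub_sq_sub_norm_sub_sq_le w u n hw hu

/-- Telescoping bound: for vectors `w_1, …, w_{T+1}` and `u_1, …, u_T` of norm at most `D̄`,
`Σ_{k=1}^{T} (‖w_k - u_k‖² - ‖w_{k+1} - u_k‖²) ≤ 5 D̄² + 2 D̄ Σ_{k=1}^{T-1} ‖u_k - u_{k+1}‖`. -/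
theorem telescoping_distance_bound
    (p T : ℕ) (hp : 0 < p) (hT : 0 < T) (Dbar : ℝ) (hD : 0 ≤ Dbar)
    (w u : ℕ → EuclideanSpace ℝ (Fin p))
    (hw : ∀ k, 1 ≤ k → k ≤ T + 1 → ‖w k‖ ≤ Dbar)
    (hu : ∀ k, 1 ≤ k → k ≤ T → ‖u k‖ ≤ Dbar) :
    ∑ k ∈ Icc 1 T, (‖w k - u k‖ ^ 2 - ‖w (k + 1) - u k‖ ^ 2)
      ≤ 5 * Dbar ^ 2 + 2 * Dbar * ∑ k ∈ Icc 1 (T - 1), ‖u k - u (k + 1)‖ :=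
  telescoping_distance_bound_general p T hT Dbar w u hw hu
end
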